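/- Let ε > 0 and δ ∈ (0,1) satisfy 12δ + 2√(8δ) ≤ ε²/18 and 1 − 2δ − (2+√8)√δ > √(1 − (ε/3)²), and set δ' = 12δ + 2√(8δ). Let (y_n)_{n=0}^∞ be a sequence in c₀₀(T) such that supp y_{n−1} ≪ supp y_n for all n ≥ 1, and such that ‖y_j·χ_{S_φ}‖_∞ = ‖y_k·χ_{S_φ}‖_∞ whenever j, k > i and |φ| ≤ M_i, where M_i = max{|ψ| : ψ ∈ supp y_i} and ‖·‖_∞ is the sup norm. Set x_n = y₀ + y_n and suppose ‖x_n‖_Y ≤ 1 for all n ≥ 1. Let η₊ > η₋ > ε/3 be such that η₋ ≤ ‖y_n‖_Y ≤ η₊ for all n ≥ 1, and set θ = √(η₋² − δ'). Suppose that ‖x_m + x_n‖_Y/2 > 1 − δ for all m ≠ n in ℕ. Then for all m < n in ℕ there exists an acceptable set A such that Σ_{φ∈A} |y_m(φ)| > θ and Σ_{φ∈A} |y_n(φ)| > θ. -/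

import Mathlib

open scoped BigOperators

/-- A node of the dyadic tree `T = ⋃ₙ {0,1}ⁿ`, modelled as a finite list of booleans.
The tree order `φ ≤ ψ` is the prefix order `φ <+: ψ`; the length of a node is its
list length. -/
abbrev Node : Type := List Bool

/-- The subtree `T_φ` consisting of all nodes `ψ` with `φ ≤ ψ`. -/
def Tsub (φ : Node) : Set Node := {ψ | φ <+: ψ}

/-- `S_φ`: the set of nodes extending `φ` by zeroes (`false`s) only. -/
def Sset (φ : Node) : Set Node := {ψ | ∃ k : ℕ, ψ = φ ++ List.replicate k false}

/-- Two nodes are incomparable if neither is a prefix of the other. -/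
def Incomparable (φ ψ : Node) : Prop := ¬ φ <+: ψ ∧ ¬ ψ <+: φ

/-- A finite set `A ⊆ T` is admissible if there is `n` such that every element of `A`
lies in some subtree `T_σ` with `|σ| = n`, and each such subtree contains at most one
element of `A`. -/
def Admissible (A : Finset Node) : Prop :=
  ∃ n : ℕ,
    (∀ φ ∈ A, ∃ σ : Node, σ.length = n ∧ σ <+: φ) ∧
    (∀ σ : Node, σ.length = n → ∀ φ ∈ A, ∀ ψ ∈ A, σ <+: φ → σ <+: ψ → φ = ψ)

/-- A finite set `A ⊆ T` is acceptable if there is `n` such that every element of `A`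
lies in some set `S_σ` with `|σ| = n`, and each such set contains at most one
element of `A`. -/
def Acceptable (A : Finset Node) : Prop :=
  ∃ n : ℕ,
    (∀ φ ∈ A, ∃ σ : Node, σ.length = n ∧ φ ∈ Sset σ) ∧
    (∀ σ : Node, σ.length = n → ∀ φ ∈ A, ∀ ψ ∈ A, φ ∈ Sset σ → ψ ∈ Sset σ → φ = ψ)

/-- `Before A B` is the relation `A ≪ B`: every node of `A` is strictly shorter than
every node of `B`. -/
def Before (A B : Finset Node) : Prop :=
  ∀ φ ∈ A, ∀ ψ ∈ B, φ.length < ψ.length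

/-- The norm `‖·‖_X` on `c₀₀(T)` (finitely supported functions on the tree, modelled
as `Node →₀ ℝ`): the supremum of `(∑ᵢ (∑_{φ ∈ Aᵢ} |x φ|)²)^{1/2}` over all finite
chains `A₁ ≪ ⋯ ≪ A_k` of admissible sets. -/
noncomputable def normX (x : Node →₀ ℝ) : ℝ :=
  sSup { r : ℝ | ∃ (k : ℕ) (A : Fin k → Finset Node),
    (∀ i, Admissible (A i)) ∧ (∀ i j : Fin k, i < j → Before (A i) (A j)) ∧
    r = Real.sqrt (∑ i, (∑ φ ∈ A i, |x φ|) ^ 2) }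

/-- The norm `‖·‖_Y` on `c₀₀(T)`: as `normX` but with acceptable sets. -/
noncomputable def normY (x : Node →₀ ℝ) : ℝ :=
  sSup { r : ℝ | ∃ (k : ℕ) (A : Fin k → Finset Node),
    (∀ i, Acceptable (A i)) ∧ (∀ i j : Fin k, i < j → Before (A i) (A j)) ∧
    r = Real.sqrt (∑ i, (∑ φ ∈ A i, |x φ|) ^ 2) }

/-- The characteristic function `χ_A` of a finite set of nodes, as an element of
`c₀₀(T)`. -/
noncomputable def chi (A : Finset Node) : Node →₀ ℝ :=
  Finsupp.indicator A fun _ _ => (1 : ℝ)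

open Classical in
/-- The sup norm `‖y·χ_S‖_∞` of the restriction of `y` to a set `S` of nodes. -/
noncomputable def supOn (y : Node →₀ ℝ) (S : Set Node) : ℝ :=
  sSup (Set.range fun ψ : Node => if ψ ∈ S then |y ψ| else 0)

/-- A branch of the dyadic tree, identified with an infinite 0-1 sequence. -/
abbrev Branch : Type := ℕ → Bool

/-- The node of length `n` on the branch `γ`. -/
def branchNode (γ : Branch) (n : ℕ) : Node := List.ofFn fun i : Fin n => γ i

/-- A branch `γ` passes through the node `φ` iff `φ ∈ γ`. -/
def PassesThrough (γ : Branch) (φ : Node) : Prop := branchNode γ φ.length = φ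

/-- A sequence is `ε`-separated: `inf {‖x_n - x_m‖ : m ≠ n} ≥ ε`. -/
def Separated {Z : Type*} [SeminormedAddGroup Z] (ε : ℝ) (x : ℕ → Z) : Prop :=
  ∀ m n : ℕ, m ≠ n → ε ≤ ‖x m - x n‖

/-- `ε`-separation with respect to a norm function `N`. -/
def SeparatedWith {Z : Type*} [AddGroup Z] (N : Z → ℝ) (ε : ℝ) (x : ℕ → Z) : Prop :=
  ∀ m n : ℕ, m ≠ n → ε ≤ N (x m - x n)

/-- `N` is a norm on the real vector space `Z`. -/
def IsNormF {Z : Type*} [AddCommGroup Z] [Module ℝ Z] (N : Z → ℝ) : Prop :=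
  (∀ x y : Z, N (x + y) ≤ N x + N y) ∧
  (∀ (a : ℝ) (x : Z), N (a • x) = |a| * N x) ∧
  (∀ x : Z, N x = 0 → x = 0)

/-- The `2`-NUC property with respect to a norm function `N`. -/
def TwoNUCWith {Z : Type*} [AddCommGroup Z] (N : Z → ℝ) : Prop :=
  ∀ ε : ℝ, 0 < ε → ∃ δ : ℝ, 0 < δ ∧ δ < 1 ∧
    ∀ u : ℕ → Z, (∀ n, N (u n) ≤ 1) → SeparatedWith N ε u →
      ∃ n₁ n₂ : ℕ, n₁ < n₂ ∧ N (u n₁ + u n₂) / 2 ≤ 1 - δ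

/-- The `1`-β property with respect to a norm function `N`. -/
def OneBetaWith {Z : Type*} [AddCommGroup Z] (N : Z → ℝ) : Prop :=
  ∀ ε : ℝ, 0 < ε → ∃ δ : ℝ, 0 < δ ∧ δ < 1 ∧
    ∀ x : Z, N x ≤ 1 → ∀ u : ℕ → Z, (∀ n, N (u n) ≤ 1) → SeparatedWith N ε u →
      ∃ n : ℕ, N (x + u n) / 2 ≤ 1 - δ

/-- The property `k`-β of a Banach space. -/
def kBeta (k : ℕ) (Z : Type*) [NormedAddCommGroup Z] : Prop :=
  ∀ ε : ℝ, 0 < ε → ∃ δ : ℝ, 0 < δ ∧ δ < 1 ∧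
    ∀ x : Z, ‖x‖ ≤ 1 → ∀ u : ℕ → Z, (∀ n, ‖u n‖ ≤ 1) → Separated ε u →
      ∃ ι : Fin k → ℕ, StrictMono ι ∧ ‖x + ∑ i, u (ι i)‖ / ((k : ℝ) + 1) ≤ 1 - δ

/-- The property `k`-NUC of a Banach space. -/
def kNUC (k : ℕ) (Z : Type*) [NormedAddCommGroup Z] : Prop :=
  ∀ ε : ℝ, 0 < ε → ∃ δ : ℝ, 0 < δ ∧ δ < 1 ∧
    ∀ u : ℕ → Z, (∀ n, ‖u n‖ ≤ 1) → Separated ε u →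
      ∃ ι : Fin k → ℕ, StrictMono ι ∧ ‖∑ i, u (ι i)‖ / (k : ℝ) ≤ 1 - δ

/-- Nearly uniform convexity. -/
def NUC (Z : Type*) [NormedAddCommGroup Z] [NormedSpace ℝ Z] : Prop :=
  ∀ ε : ℝ, 0 < ε → ∃ δ : ℝ, δ < 1 ∧
    ∀ u : ℕ → Z, (∀ n, ‖u n‖ ≤ 1) → Separated ε u →
      ∃ y ∈ convexHull ℝ (Set.range u), ‖y‖ ≤ δ

open Finset

lemma sset_length_le {σ φ : Node} (h : φ ∈ Sset σ) : σ.length ≤ φ.length := by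
  obtain ⟨k, rfl⟩ := h; simp

lemma sset_take {σ φ : Node} (h : φ ∈ Sset σ) : φ.take σ.length = σ := by
  obtain ⟨k, rfl⟩ := h; exact List.take_left

lemma mem_sset_self (σ : Node) : σ ∈ Sset σ := ⟨0, by simp⟩

lemma acceptable_subset {A B : Finset Node} (hBA : B ⊆ A) (h : Acceptable A) : Acceptable B := by
  obtain ⟨n, h1, h2⟩ := h
  exact ⟨n, fun φ hφ => h1 φ (hBA hφ), fun σ hσ φ hφ ψ hψ => h2 σ hσ φ (hBA hφ) ψ (hBA hψ)⟩

lemma before_mono {A B A' B' : Finset Node} (hA : A' ⊆ A) (hB : B' ⊆ B) (h : Before A B) :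
    Before A' B' := fun φ hφ ψ hψ => h φ (hA hφ) ψ (hB hψ)

def SY (x : Node →₀ ℝ) : Set ℝ :=
  { r : ℝ | ∃ (k : ℕ) (A : Fin k → Finset Node),
    (∀ i, Acceptable (A i)) ∧ (∀ i j : Fin k, i < j → Before (A i) (A j)) ∧
    r = Real.sqrt (∑ i, (∑ φ ∈ A i, |x φ|) ^ 2) }

lemma normY_eq (x : Node →₀ ℝ) : normY x = sSup (SY x) := rfl

lemma SY_nonneg {x : Node →₀ ℝ} {r : ℝ} (h : r ∈ SY x) : 0 ≤ r := by
  obtain ⟨k, A, -, -, rfl⟩ := h; exact Real.sqrt_nonneg _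

lemma SY_zero_mem (x : Node →₀ ℝ) : (0:ℝ) ∈ SY x :=
  ⟨0, Fin.elim0, fun i => i.elim0, fun i => i.elim0, by simp⟩

lemma SY_le_sum {x : Node →₀ ℝ} {r : ℝ} (h : r ∈ SY x) : r ≤ ∑ φ ∈ x.support, |x φ| := by
  classical
  obtain ⟨k, A, hacc, hbef, rfl⟩ := h
  set C : ℝ := ∑ φ ∈ x.support, |x φ| with hC
  have hC0 : 0 ≤ C := Finset.sum_nonneg fun _ _ => abs_nonneg _
  set t : Fin k → ℝ := fun i => ∑ φ ∈ A i, |x φ| with ht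
  have ht0 : ∀ i, 0 ≤ t i := fun i => Finset.sum_nonneg fun _ _ => abs_nonneg _
  have htles : ∑ i, t i ≤ C := by
    have hre : ∀ i : Fin k, t i = ∑ φ ∈ A i ∩ x.support, |x φ| := by
      intro i
      refine (Finset.sum_subset Finset.inter_subset_left ?_).symm
      intro φ hφ hnφ
      have : φ ∉ x.support := fun hs => hnφ (Finset.mem_inter.2 ⟨hφ, hs⟩)
      simp [Finsupp.notMem_support_iff.1 this]
    have hdisj : (↑(Finset.univ : Finset (Fin k)) : Set (Fin k)).PairwiseDisjoint
        (fun i => A i ∩ x.support) := by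
      intro i _ j _ hij
      have hb : ∀ {a b : Fin k}, a < b → Disjoint (A a ∩ x.support) (A b ∩ x.support) := by
        intro a b hab
        refine Finset.disjoint_left.2 fun φ h1 h2 => ?_
        exact lt_irrefl φ.length
          (hbef a b hab φ (Finset.mem_inter.1 h1).1 φ (Finset.mem_inter.1 h2).1)
      rcases lt_or_gt_of_ne hij with h | h
      · exact hb h
      · exact (hb h).symm
    calc ∑ i, t i = ∑ i, ∑ φ ∈ A i ∩ x.support, |x φ| := Finset.sum_congr rfl fun i _ => hre i
      _ = ∑ φ ∈ Finset.univ.biUnion (fun i => A i ∩ x.support), |x φ| :=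
          (Finset.sum_biUnion hdisj).symm
      _ ≤ C := by
          refine Finset.sum_le_sum_of_subset_of_nonneg ?_ (fun _ _ _ => abs_nonneg _)
          intro φ hφ
          obtain ⟨i, -, hi⟩ := Finset.mem_biUnion.1 hφ
          exact (Finset.mem_inter.1 hi).2
  have hsq : ∑ i, (t i)^2 ≤ (∑ i, t i)^2 := by
    calc ∑ i, (t i)^2 ≤ ∑ i, t i * ∑ j, t j := by
          refine Finset.sum_le_sum fun i _ => ?_
          have h1 : t i ≤ ∑ j, t j :=
            Finset.single_le_sum (fun j _ => ht0 j) (Finset.mem_univ i)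
          nlinarith [ht0 i]
      _ = (∑ i, t i)^2 := by rw [← Finset.sum_mul]; ring
  show Real.sqrt (∑ i, (t i)^2) ≤ C
  calc Real.sqrt (∑ i, (t i)^2) ≤ Real.sqrt ((∑ i, t i)^2) := Real.sqrt_le_sqrt hsq
    _ = ∑ i, t i := Real.sqrt_sq (Finset.sum_nonneg fun i _ => ht0 i)
    _ ≤ C := htles

lemma SY_bdd (x : Node →₀ ℝ) : BddAbove (SY x) :=
  ⟨∑ φ ∈ x.support, |x φ|, fun _ h => SY_le_sum h⟩

lemma chainValue_le_normY (x : Node →₀ ℝ) {k : ℕ} (A : Fin k → Finset Node)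
    (h1 : ∀ i, Acceptable (A i)) (h2 : ∀ i j : Fin k, i < j → Before (A i) (A j)) :
    Real.sqrt (∑ i, (∑ φ ∈ A i, |x φ|) ^ 2) ≤ normY x :=
  le_csSup (SY_bdd x) ⟨k, A, h1, h2, rfl⟩

lemma normY_nonneg (x : Node →₀ ℝ) : 0 ≤ normY x :=
  le_csSup (SY_bdd x) (SY_zero_mem x)

lemma normY_le {x : Node →₀ ℝ} {C : ℝ} (h : ∀ r ∈ SY x, r ≤ C) (hC : 0 ≤ C) : normY x ≤ C :=
  Real.sSup_le h hC

lemma normY_mono {f g : Node →₀ ℝ} (h : ∀ φ, |f φ| ≤ |g φ|) : normY f ≤ normY g := by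
  refine normY_le (fun r hr => ?_) (normY_nonneg g)
  obtain ⟨k, A, h1, h2, rfl⟩ := hr
  refine le_trans (Real.sqrt_le_sqrt ?_) (chainValue_le_normY g A h1 h2)
  refine Finset.sum_le_sum fun i _ => ?_
  have h3 : ∑ φ ∈ A i, |f φ| ≤ ∑ φ ∈ A i, |g φ| := Finset.sum_le_sum fun φ _ => h φ
  have h4 : 0 ≤ ∑ φ ∈ A i, |f φ| := Finset.sum_nonneg fun _ _ => abs_nonneg _
  nlinarith

lemma sqrt_sum_sq_add_le {k : ℕ} (f g : Fin k → ℝ) :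
    Real.sqrt (∑ i, (f i + g i)^2) ≤
      Real.sqrt (∑ i, f i ^ 2) + Real.sqrt (∑ i, g i ^ 2) := by
  have hf : (0:ℝ) ≤ ∑ i, f i ^ 2 := Finset.sum_nonneg fun _ _ => sq_nonneg _
  have hg : (0:ℝ) ≤ ∑ i, g i ^ 2 := Finset.sum_nonneg fun _ _ => sq_nonneg _
  have hcs : (∑ i, f i * g i) ≤ Real.sqrt (∑ i, f i ^ 2) * Real.sqrt (∑ i, g i ^ 2) := by
    have h1 := Finset.sum_mul_sq_le_sq_mul_sq Finset.univ f g
    have h2 : 0 ≤ Real.sqrt (∑ i, f i ^ 2) * Real.sqrt (∑ i, g i ^ 2) :=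
      mul_nonneg (Real.sqrt_nonneg _) (Real.sqrt_nonneg _)
    nlinarith [Real.sq_sqrt hf, Real.sq_sqrt hg, sq_nonneg ((∑ i, f i * g i))]
  have hexp : ∑ i, (f i + g i)^2 =
      (∑ i, f i ^ 2) + (∑ i, g i ^ 2) + 2 * ∑ i, f i * g i := by
    rw [← Finset.sum_add_distrib, Finset.mul_sum, ← Finset.sum_add_distrib]
    exact Finset.sum_congr rfl fun i _ => by ring
  have h3 : ∑ i, (f i + g i)^2 ≤
      (Real.sqrt (∑ i, f i ^ 2) + Real.sqrt (∑ i, g i ^ 2))^2 := by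
    rw [hexp]
    nlinarith [Real.sq_sqrt hf, Real.sq_sqrt hg]
  calc Real.sqrt (∑ i, (f i + g i)^2)
      ≤ Real.sqrt ((Real.sqrt (∑ i, f i ^ 2) + Real.sqrt (∑ i, g i ^ 2))^2) :=
        Real.sqrt_le_sqrt h3
    _ = _ := Real.sqrt_sq (by positivity)

lemma normY_add_le (f g : Node →₀ ℝ) : normY (f + g) ≤ normY f + normY g := by
  refine normY_le (fun r hr => ?_) (add_nonneg (normY_nonneg f) (normY_nonneg g))
  obtain ⟨k, A, h1, h2, rfl⟩ := hr
  have hstep : Real.sqrt (∑ i, (∑ φ ∈ A i, |(f + g) φ|) ^ 2) ≤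
      Real.sqrt (∑ i, ((∑ φ ∈ A i, |f φ|) + (∑ φ ∈ A i, |g φ|)) ^ 2) := by
    refine Real.sqrt_le_sqrt (Finset.sum_le_sum fun i _ => ?_)
    have h3 : ∑ φ ∈ A i, |(f + g) φ| ≤ (∑ φ ∈ A i, |f φ|) + (∑ φ ∈ A i, |g φ|) := by
      rw [← Finset.sum_add_distrib]
      refine Finset.sum_le_sum fun φ _ => ?_
      simpa using abs_add_le (f φ) (g φ)
    have h4 : 0 ≤ ∑ φ ∈ A i, |(f + g) φ| := Finset.sum_nonneg fun _ _ => abs_nonneg _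
    nlinarith
  refine hstep.trans ?_
  refine (sqrt_sum_sq_add_le (fun i => ∑ φ ∈ A i, |f φ|) (fun i => ∑ φ ∈ A i, |g φ|)).trans ?_
  exact add_le_add (chainValue_le_normY f A h1 h2) (chainValue_le_normY g A h1 h2)

lemma chain_append_le_normY (x : Node →₀ ℝ) {k l : ℕ}
    (A : Fin k → Finset Node) (E : Fin l → Finset Node)
    (hA : ∀ i, Acceptable (A i)) (hAb : ∀ i j : Fin k, i < j → Before (A i) (A j))
    (hE : ∀ i, Acceptable (E i)) (hEb : ∀ i j : Fin l, i < j → Before (E i) (E j))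
    (hcross : ∀ i j, Before (A i) (E j)) :
    Real.sqrt ((∑ i, (∑ φ ∈ A i, |x φ|) ^ 2) + ∑ j, (∑ φ ∈ E j, |x φ|) ^ 2) ≤ normY x := by
  set G : Fin (k + l) → Finset Node := Fin.append A E with hG
  have hGl : ∀ (i : Fin (k + l)) (h : i.1 < k), G i = A ⟨i.1, h⟩ := by
    intro i h
    have h2 := Fin.append_left A E ⟨i.1, h⟩
    rwa [show Fin.castAdd l ⟨i.1, h⟩ = i from by ext; rfl] at h2
  have hGr : ∀ (i : Fin (k + l)) (h : k ≤ i.1), G i = E ⟨i.1 - k, by omega⟩ := by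
    intro i h
    have h2 := Fin.append_right A E ⟨i.1 - k, by omega⟩
    rwa [show Fin.natAdd k ⟨i.1 - k, by omega⟩ = i from by ext; simp; omega] at h2
  have hacc : ∀ i, Acceptable (G i) := by
    intro i
    rcases lt_or_ge i.1 k with h | h
    · rw [hGl i h]; exact hA _
    · rw [hGr i h]; exact hE _
  have hbef : ∀ i j : Fin (k + l), i < j → Before (G i) (G j) := by
    intro i j hij
    have hij' : i.1 < j.1 := hij
    rcases lt_or_ge i.1 k with hi | hi <;> rcases lt_or_ge j.1 k with hj | hj
    · rw [hGl i hi, hGl j hj]; exact hAb _ _ hij'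
    · rw [hGl i hi, hGr j hj]; exact hcross _ _
    · omega
    · rw [hGr i hi, hGr j hj]
      exact hEb _ _ (by simp [Fin.lt_def]; omega)
  have hval : ∑ i : Fin (k + l), (∑ φ ∈ G i, |x φ|) ^ 2 =
      (∑ i, (∑ φ ∈ A i, |x φ|) ^ 2) + ∑ j, (∑ φ ∈ E j, |x φ|) ^ 2 := by
    rw [Fin.sum_univ_add]
    congr 1
    · exact Finset.sum_congr rfl fun i _ => by rw [hG, Fin.append_left]
    · exact Finset.sum_congr rfl fun i _ => by rw [hG, Fin.append_right]
  rw [← hval]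
  exact chainValue_le_normY x G hacc hbef

open Classical in
lemma supOn_bddAbove (g : Node →₀ ℝ) (S : Set Node) :
    BddAbove (Set.range fun ψ : Node => if ψ ∈ S then |g ψ| else 0) := by
  refine ⟨∑ φ ∈ g.support, |g φ|, ?_⟩
  rintro r ⟨ψ, rfl⟩
  have hC0 : (0:ℝ) ≤ ∑ φ ∈ g.support, |g φ| := Finset.sum_nonneg fun _ _ => abs_nonneg _
  by_cases h : ψ ∈ S
  · by_cases hs : ψ ∈ g.support
    · simp only [if_pos h]
      exact Finset.single_le_sum (fun φ _ => abs_nonneg (g φ)) hs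
    · simp [h, Finsupp.notMem_support_iff.1 hs, hC0]
  · simp [h, hC0]

lemma le_supOn (g : Node →₀ ℝ) {S : Set Node} {φ : Node} (hφ : φ ∈ S) :
    |g φ| ≤ supOn g S := by
  refine le_trans ?_ (le_csSup (supOn_bddAbove g S) ⟨φ, rfl⟩)
  simp [hφ]

lemma exists_supOn_attain (g : Node →₀ ℝ) (S : Set Node) {v : ℝ} (hv : 0 < v)
    (hle : v ≤ supOn g S) : ∃ ψ ∈ S, g ψ ≠ 0 ∧ v ≤ |g ψ| := by
  classical
  set F : Finset Node := g.support.filter (· ∈ S) with hF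
  rcases Finset.eq_empty_or_nonempty F with hFe | hFn
  · exfalso
    have : supOn g S ≤ 0 := by
      unfold supOn
      refine Real.sSup_le ?_ le_rfl
      rintro r ⟨ψ, rfl⟩
      by_cases h : ψ ∈ S
      · have : ψ ∉ g.support := by
          intro hs
          have : ψ ∈ F := by rw [hF]; exact Finset.mem_filter.2 ⟨hs, h⟩
          simp [hFe] at this
        simp [h, Finsupp.notMem_support_iff.1 this]
      · simp [h]
    linarith
  · obtain ⟨ψ, hψF, hmax⟩ := Finset.exists_max_image F (fun χ => |g χ|) hFn
    obtain ⟨hψs, hψS⟩ := Finset.mem_filter.1 (hF ▸ hψF)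
    refine ⟨ψ, hψS, Finsupp.mem_support_iff.1 hψs, le_trans hle ?_⟩
    unfold supOn
    refine Real.sSup_le ?_ (abs_nonneg _)
    rintro r ⟨χ, rfl⟩
    by_cases h : χ ∈ S
    · by_cases hs : χ ∈ g.support
      · simp only [if_pos h]
        exact hmax χ (Finset.mem_filter.2 ⟨hs, h⟩)
      · simp [h, Finsupp.notMem_support_iff.1 hs]
    · simp [h]

lemma abs_pair {a b : ℝ} (h : a = 0 ∨ b = 0) : |a + b| = |a| + |b| := by
  rcases h with h | h <;> simp [h]

lemma abs_triple {a b c : ℝ} (hab : a = 0 ∨ b = 0) (hac : a = 0 ∨ c = 0)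
    (hbc : b = 0 ∨ c = 0) : |2 * a + b + c| = 2 * |a| + |b| + |c| := by
  rcases hab with h | h
  · rcases hbc with h'' | h'' <;> simp [h, h'', abs_mul]
  · rcases hac with h' | h' <;> simp [h, h', abs_mul]

lemma sq_lt_of_lt_sqrt {a S : ℝ} (ha : 0 ≤ a) (h : a < Real.sqrt S) : a^2 < S := by
  have hpos : 0 < Real.sqrt S := lt_of_le_of_lt ha h
  have hS : 0 < S := Real.sqrt_pos.1 hpos
  nlinarith [Real.sq_sqrt (le_of_lt hS)]

lemma lt_sqrt_of_sq_lt {a S : ℝ} (h : a^2 < S) : a < Real.sqrt S := by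
  rcases le_or_gt a 0 with ha | ha
  · exact lt_of_le_of_lt ha (Real.sqrt_pos.2 (lt_of_le_of_lt (sq_nonneg a) h))
  · have hS : 0 ≤ S := le_of_lt (lt_of_le_of_lt (sq_nonneg a) h)
    nlinarith [Real.sq_sqrt hS, Real.sqrt_nonneg S]

lemma theta_le_aux {X t θv : ℝ} (hθ : 0 ≤ θv) (ht : 0 ≤ t) (hX0 : 0 ≤ X) (hX1 : X ≤ 1)
    (htX : t ≤ X) (hsq : θv^2 = X - 2*Real.sqrt t) : θv ≤ Real.sqrt X - Real.sqrt t := by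
  have hXX := Real.sq_sqrt hX0
  have htt := Real.sq_sqrt ht
  have hsX : Real.sqrt X ≤ 1 := by
    rw [show (1:ℝ) = Real.sqrt 1 from Real.sqrt_one.symm]
    exact Real.sqrt_le_sqrt hX1
  have hs8 : Real.sqrt t ≤ Real.sqrt X := Real.sqrt_le_sqrt htX
  have h1 : θv^2 ≤ (Real.sqrt X - Real.sqrt t)^2 := by
    rw [hsq]
    nlinarith [Real.sqrt_nonneg t]
  nlinarith [sub_nonneg.2 hs8]

set_option maxHeartbeats 2000000 in

/-- **The Claim in Proposition 3.** Under the hypotheses set up in the proof that `Y`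
is `2`-NUC (the sequence `(y_i)_{i ≥ 0}` has successive supports, the equal-sup-norm
condition on the sets `S_φ` for `|φ| ≤ M_i = max{|ψ| : ψ ∈ supp y_i}` holds, the
vectors `x_n = y₀ + y_n` (`n ≥ 1`) lie in the unit ball of `‖·‖_Y`,
`ηplus > ηminus > ε/3` bound the norms `‖y_n‖_Y`, `θ = √(ηminus² - δ')` with
`δ' = 12δ + 2√(8δ)`, and `‖x_m + x_n‖_Y / 2 > 1 - δ` for all `m ≠ n ≥ 1`), for all
`1 ≤ m < n` there is an acceptable set `A` with `∑_{φ ∈ A} |y_m φ| > θ` and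
`∑_{φ ∈ A} |y_n φ| > θ`. -/
theorem claim_acceptable_Y (ε δ δ' ηplus ηminus θ : ℝ)
    (hε : 0 < ε) (hδ0 : 0 < δ) (hδ1 : δ < 1)
    (hδ' : δ' = 12 * δ + 2 * Real.sqrt (8 * δ))
    (hY1 : 12 * δ + 2 * Real.sqrt (8 * δ) ≤ ε ^ 2 / 18)
    (hY2 : Real.sqrt (1 - (ε / 3) ^ 2) < 1 - 2 * δ - (2 + Real.sqrt 8) * Real.sqrt δ)
    (y : ℕ → (Node →₀ ℝ))
    (hsupp : ∀ n : ℕ, Before (y n).support (y (n + 1)).support)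
    (hsup : ∀ i j k : ℕ, i < j → i < k → ∀ φ : Node,
      (φ.length : WithBot ℕ) ≤ (((y i).support).image List.length).max →
      supOn (y j) (Sset φ) = supOn (y k) (Sset φ))
    (hx : ∀ n : ℕ, 1 ≤ n → normY (y 0 + y n) ≤ 1)
    (hη : ε / 3 < ηminus) (hη' : ηminus < ηplus)
    (hybound : ∀ n : ℕ, 1 ≤ n → ηminus ≤ normY (y n) ∧ normY (y n) ≤ ηplus)
    (hθ : θ = Real.sqrt (ηminus ^ 2 - δ'))
    (hsep : ∀ m n : ℕ, 1 ≤ m → 1 ≤ n → m ≠ n →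
      1 - δ < normY ((y 0 + y m) + (y 0 + y n)) / 2) :
    ∀ m n : ℕ, 1 ≤ m → m < n →
      ∃ A : Finset Node, Acceptable A ∧
        θ < ∑ φ ∈ A, |y m φ| ∧ θ < ∑ φ ∈ A, |y n φ| := by
  intro m n hm hmn
  classical
  have hn : 1 ≤ n := le_trans hm hmn.le
  -- numerics
  have hsqrt8δ : 0 ≤ Real.sqrt (8*δ) := Real.sqrt_nonneg _
  have h2δlt1 : 2 * δ < 1 := by
    nlinarith [Real.sqrt_nonneg (1 - (ε/3)^2), Real.sqrt_nonneg δ, Real.sqrt_nonneg 8]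
  have hηpos : 0 < ηminus := lt_trans (by positivity) hη
  have hηε : ε^2/9 < ηminus^2 := by nlinarith
  have hbig : 24*δ + 4*Real.sqrt (8*δ) < ηminus^2 := by nlinarith
  -- support facts
  have hsuppne : ∀ p : ℕ, 1 ≤ p → ((y p).support).Nonempty := by
    intro p hp
    rcases Finset.eq_empty_or_nonempty (y p).support with he | hne
    · exfalso
      have h0 : y p = 0 := Finsupp.support_eq_empty.1 he
      have h1 : normY (y p) ≤ 0 := by
        refine normY_le (fun r hr => ?_) le_rfl
        have h2 := SY_le_sum hr
        simpa [h0] using h2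
      have h3 := (hybound p hp).1
      nlinarith
    · exact hne
  have hbefsupp : ∀ a b : ℕ, a < b → Before (y a).support (y b).support := by
    intro a b hab
    induction b with
    | zero => omega
    | succ b ih =>
      rcases Nat.lt_or_ge a b with h | h
      · have h1 := ih h
        have h2 := hsupp b
        obtain ⟨χ, hχ⟩ := hsuppne b (by omega)
        intro φ hφ ψ hψ
        exact lt_trans (h1 φ hφ χ hχ) (h2 χ hχ ψ hψ)
      · have hab2 : a = b := by omega
        subst hab2; exact hsupp a
  have hdis : ∀ a b : ℕ, a < b → ∀ φ, y a φ = 0 ∨ y b φ = 0 := by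
    intro a b hab φ
    by_contra hcon
    push_neg at hcon
    exact lt_irrefl _ (hbefsupp a b hab φ (Finsupp.mem_support_iff.2 hcon.1) φ
      (Finsupp.mem_support_iff.2 hcon.2))
  have hyle1 : ∀ p : ℕ, 1 ≤ p → normY (y p) ≤ 1 := by
    intro p hp
    refine le_trans (normY_mono (fun φ => ?_)) (hx p hp)
    rcases hdis 0 p hp φ with h | h
    · simp [Finsupp.add_apply, h]
    · simp [Finsupp.add_apply, h]
  have hη1 : ηminus ≤ 1 := le_trans (hybound n hn).1 (hyle1 n hn)
  -- main chain
  have hsep' : 2*(1-δ) < normY ((y 0 + y m) + (y 0 + y n)) := by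
    have h1 := hsep m n hm hn (Nat.ne_of_lt hmn)
    linarith
  set Z : Node →₀ ℝ := (y 0 + y m) + (y 0 + y n) with hZ
  rw [normY_eq] at hsep'
  obtain ⟨r0, hr0mem, hr0gt⟩ := exists_lt_of_lt_csSup ⟨0, SY_zero_mem Z⟩ hsep'
  obtain ⟨k, A, hAacc, hAbef, hr0val⟩ := hr0mem
  set b : Fin k → ℝ := fun i => ∑ φ ∈ A i, |y 0 φ| with hbdef
  set c : Fin k → ℝ := fun i => ∑ φ ∈ A i, |y m φ| with hcdef
  set d : Fin k → ℝ := fun i => ∑ φ ∈ A i, |y n φ| with hddef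
  have hb0 : ∀ i, 0 ≤ b i := fun i => Finset.sum_nonneg fun _ _ => abs_nonneg _
  have hc0 : ∀ i, 0 ≤ c i := fun i => Finset.sum_nonneg fun _ _ => abs_nonneg _
  have hd0 : ∀ i, 0 ≤ d i := fun i => Finset.sum_nonneg fun _ _ => abs_nonneg _
  have habsZ : ∀ φ, |Z φ| = 2*|y 0 φ| + |y m φ| + |y n φ| := by
    intro φ
    have h1 : Z φ = 2*(y 0 φ) + y m φ + y n φ := by
      simp [hZ, Finsupp.add_apply]; ring
    rw [h1]
    exact abs_triple (hdis 0 m hm φ) (hdis 0 n hn φ) (hdis m n hmn φ)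
  have hsZ : ∀ i, ∑ φ ∈ A i, |Z φ| = 2*b i + c i + d i := by
    intro i
    calc ∑ φ ∈ A i, |Z φ| = ∑ φ ∈ A i, (2*|y 0 φ| + |y m φ| + |y n φ|) :=
          Finset.sum_congr rfl fun φ _ => habsZ φ
      _ = 2*b i + c i + d i := by
          rw [Finset.sum_add_distrib, Finset.sum_add_distrib, ← Finset.mul_sum]
  have hsm : ∀ i, ∑ φ ∈ A i, |(y 0 + y m) φ| = b i + c i := by
    intro i
    calc ∑ φ ∈ A i, |(y 0 + y m) φ| = ∑ φ ∈ A i, (|y 0 φ| + |y m φ|) := by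
          refine Finset.sum_congr rfl fun φ _ => ?_
          rw [Finsupp.add_apply]
          exact abs_pair (hdis 0 m hm φ)
      _ = b i + c i := Finset.sum_add_distrib
  have hsn : ∀ i, ∑ φ ∈ A i, |(y 0 + y n) φ| = b i + d i := by
    intro i
    calc ∑ φ ∈ A i, |(y 0 + y n) φ| = ∑ φ ∈ A i, (|y 0 φ| + |y n φ|) := by
          refine Finset.sum_congr rfl fun φ _ => ?_
          rw [Finsupp.add_apply]
          exact abs_pair (hdis 0 n hn φ)
      _ = b i + d i := Finset.sum_add_distrib
  -- quantities
  have hSunn : (0:ℝ) ≤ ∑ i, (b i + c i)^2 := Finset.sum_nonneg fun _ _ => sq_nonneg _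
  have hSvnn : (0:ℝ) ≤ ∑ i, (b i + d i)^2 := Finset.sum_nonneg fun _ _ => sq_nonneg _
  have hSuvnn : (0:ℝ) ≤ ∑ i, (2*b i + c i + d i)^2 := Finset.sum_nonneg fun _ _ => sq_nonneg _
  have hSu : ∑ i, (b i + c i)^2 ≤ 1 := by
    have h1 := chainValue_le_normY (y 0 + y m) A hAacc hAbef
    rw [show (∑ i, (∑ φ ∈ A i, |(y 0 + y m) φ|)^2) = ∑ i, (b i + c i)^2 from
      Finset.sum_congr rfl fun i _ => by rw [hsm i]] at h1
    have h3 : Real.sqrt (∑ i, (b i + c i)^2) ≤ 1 := le_trans h1 (hx m hm)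
    nlinarith [Real.sq_sqrt hSunn, Real.sqrt_nonneg (∑ i, (b i + c i)^2)]
  have hSv : ∑ i, (b i + d i)^2 ≤ 1 := by
    have h1 := chainValue_le_normY (y 0 + y n) A hAacc hAbef
    rw [show (∑ i, (∑ φ ∈ A i, |(y 0 + y n) φ|)^2) = ∑ i, (b i + d i)^2 from
      Finset.sum_congr rfl fun i _ => by rw [hsn i]] at h1
    have h3 : Real.sqrt (∑ i, (b i + d i)^2) ≤ 1 := le_trans h1 (hx n hn)
    nlinarith [Real.sq_sqrt hSvnn, Real.sqrt_nonneg (∑ i, (b i + d i)^2)]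
  have hSuv : 4*(1-δ)^2 < ∑ i, (2*b i + c i + d i)^2 := by
    have h1 : r0 = Real.sqrt (∑ i, (2*b i + c i + d i)^2) := by
      rw [hr0val]
      congr 1
      exact Finset.sum_congr rfl fun i _ => by rw [hsZ i]
    nlinarith [Real.sq_sqrt hSuvnn, hr0gt, hδ1]
  have hSdiff : ∑ i, (c i - d i)^2 < 8*δ := by
    have hsum : (∑ i, (c i - d i)^2) + (∑ i, (2*b i + c i + d i)^2) =
        2*(∑ i, (b i + c i)^2) + 2*(∑ i, (b i + d i)^2) := by
      rw [← Finset.sum_add_distrib, Finset.mul_sum, Finset.mul_sum, ← Finset.sum_add_distrib]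
      exact Finset.sum_congr rfl fun i _ => by ring
    nlinarith
  have hSb : ∑ i, (b i)^2 ≤ 1 - ηminus^2 := by
    have hkey : ∀ r ∈ SY (y n), (∑ i, (b i)^2) + r^2 ≤ 1 := by
      intro r hr
      obtain ⟨l, E, hEacc, hEbef, rfl⟩ := hr
      have hA0 : ∀ i, ∑ φ ∈ A i ∩ (y 0).support, |(y 0 + y n) φ| = b i := by
        intro i
        have h1 : ∀ φ ∈ A i ∩ (y 0).support, |(y 0 + y n) φ| = |y 0 φ| := by
          intro φ hφ
          have hm0 : y 0 φ ≠ 0 := Finsupp.mem_support_iff.1 (Finset.mem_inter.1 hφ).2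
          rcases hdis 0 n hn φ with h | h
          · exact absurd h hm0
          · rw [Finsupp.add_apply, h, add_zero]
        rw [Finset.sum_congr rfl h1]
        exact Finset.sum_subset Finset.inter_subset_left (fun φ hφ hnφ => by
          have : φ ∉ (y 0).support := fun hs => hnφ (Finset.mem_inter.2 ⟨hφ, hs⟩)
          simp [Finsupp.notMem_support_iff.1 this])
      have hE0 : ∀ jl, ∑ φ ∈ E jl ∩ (y n).support, |(y 0 + y n) φ| = ∑ φ ∈ E jl, |y n φ| := by
        intro jl
        have h1 : ∀ φ ∈ E jl ∩ (y n).support, |(y 0 + y n) φ| = |y n φ| := by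
          intro φ hφ
          have hm0 : y n φ ≠ 0 := Finsupp.mem_support_iff.1 (Finset.mem_inter.1 hφ).2
          rcases hdis 0 n hn φ with h | h
          · rw [Finsupp.add_apply, h, zero_add]
          · exact absurd h hm0
        rw [Finset.sum_congr rfl h1]
        exact Finset.sum_subset Finset.inter_subset_left (fun φ hφ hnφ => by
          have : φ ∉ (y n).support := fun hs => hnφ (Finset.mem_inter.2 ⟨hφ, hs⟩)
          simp [Finsupp.notMem_support_iff.1 this])
      have hval := chain_append_le_normY (y 0 + y n)
        (fun i => A i ∩ (y 0).support) (fun jl => E jl ∩ (y n).support)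
        (fun i => acceptable_subset Finset.inter_subset_left (hAacc i))
        (fun i jl hij => before_mono Finset.inter_subset_left Finset.inter_subset_left
          (hAbef i jl hij))
        (fun jl => acceptable_subset Finset.inter_subset_left (hEacc jl))
        (fun i jl hij => before_mono Finset.inter_subset_left Finset.inter_subset_left
          (hEbef i jl hij))
        (fun i jl => fun φ hφ ψ hψ => hbefsupp 0 n hn φ (Finset.mem_inter.1 hφ).2 ψ
          (Finset.mem_inter.1 hψ).2)
      rw [show (∑ i, (∑ φ ∈ A i ∩ (y 0).support, |(y 0 + y n) φ|)^2) = ∑ i, (b i)^2 from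
        Finset.sum_congr rfl fun i _ => by rw [hA0 i]] at hval
      rw [show (∑ jl, (∑ φ ∈ E jl ∩ (y n).support, |(y 0 + y n) φ|)^2) =
          ∑ jl, (∑ φ ∈ E jl, |y n φ|)^2 from
        Finset.sum_congr rfl fun jl _ => by rw [hE0 jl]] at hval
      have h2 := le_trans hval (hx n hn)
      have hTnn : (0:ℝ) ≤ (∑ i, (b i)^2) + ∑ jl, (∑ φ ∈ E jl, |y n φ|)^2 := by
        have : (0:ℝ) ≤ ∑ jl, (∑ φ ∈ E jl, |y n φ|)^2 :=
          Finset.sum_nonneg fun _ _ => sq_nonneg _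
        have hb2 : (0:ℝ) ≤ ∑ i, (b i)^2 := Finset.sum_nonneg fun _ _ => sq_nonneg _
        linarith
      have h3 : (∑ i, (b i)^2) + (∑ jl, (∑ φ ∈ E jl, |y n φ|)^2) ≤ 1 := by
        nlinarith [Real.sq_sqrt hTnn, Real.sqrt_nonneg ((∑ i, (b i)^2) +
          ∑ jl, (∑ φ ∈ E jl, |y n φ|)^2)]
      have h4 : (Real.sqrt (∑ jl, (∑ φ ∈ E jl, |y n φ|)^2))^2 =
          ∑ jl, (∑ φ ∈ E jl, |y n φ|)^2 :=
        Real.sq_sqrt (Finset.sum_nonneg fun _ _ => sq_nonneg _)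
      linarith [h4 ▸ h3]
    have hb1 : ∑ i, (b i)^2 ≤ 1 := by
      calc ∑ i, (b i)^2 ≤ ∑ i, (b i + c i)^2 :=
            Finset.sum_le_sum fun i _ => by nlinarith [hb0 i, hc0 i]
        _ ≤ 1 := hSu
    have h2 : normY (y n) ≤ Real.sqrt (1 - ∑ i, (b i)^2) := by
      refine normY_le (fun r hr => ?_) (Real.sqrt_nonneg _)
      have h3 := hkey r hr
      have h4 := SY_nonneg hr
      calc r = Real.sqrt (r^2) := (Real.sqrt_sq h4).symm
        _ ≤ Real.sqrt (1 - ∑ i, (b i)^2) := Real.sqrt_le_sqrt (by linarith)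
    have h5 : ηminus ≤ Real.sqrt (1 - ∑ i, (b i)^2) := le_trans (hybound n hn).1 h2
    nlinarith [Real.sq_sqrt (show (0:ℝ) ≤ 1 - ∑ i, (b i)^2 by linarith)]
  -- dichotomy
  have hex : ∀ (g : Node →₀ ℝ) (i : Fin k), 0 < ∑ φ ∈ A i, |g φ| → ∃ φ ∈ A i, g φ ≠ 0 := by
    intro g i hpos
    by_contra hcon
    push_neg at hcon
    have h1 : ∑ φ ∈ A i, |g φ| = 0 := Finset.sum_eq_zero fun φ hφ => by simp [hcon φ hφ]
    linarith
  by_cases hstr : ∃ j : Fin k, 0 < b j ∧ 0 < d j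
  · exfalso
    obtain ⟨j, hbj, hdj⟩ := hstr
    obtain ⟨φ0, hφ0A, hφ0⟩ := hex (y 0) j hbj
    obtain ⟨φn, hφnA, hφn⟩ := hex (y n) j hdj
    have hφ0s : φ0 ∈ (y 0).support := Finsupp.mem_support_iff.2 hφ0
    have hφns : φn ∈ (y n).support := Finsupp.mem_support_iff.2 hφn
    have hczero : ∀ i, i ≠ j → c i = 0 := by
      intro i hij
      by_contra hne
      obtain ⟨ψ, hψA, hψ⟩ := hex (y m) i (lt_of_le_of_ne (hc0 i) (Ne.symm hne))
      have hψm : ψ ∈ (y m).support := Finsupp.mem_support_iff.2 hψ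
      rcases lt_or_gt_of_ne hij with h | h
      · have h1 := hAbef i j h ψ hψA φ0 hφ0A
        have h2 := hbefsupp 0 m hm φ0 hφ0s ψ hψm
        omega
      · have h1 := hAbef j i h φn hφnA ψ hψA
        have h2 := hbefsupp m n hmn ψ hψm φn hφns
        omega
    have hbzero : ∀ i, j < i → b i = 0 := by
      intro i hji
      by_contra hne
      obtain ⟨ψ, hψA, hψ⟩ := hex (y 0) i (lt_of_le_of_ne (hb0 i) (Ne.symm hne))
      have hψ0 : ψ ∈ (y 0).support := Finsupp.mem_support_iff.2 hψ
      have h1 := hAbef j i hji φn hφnA ψ hψA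
      have h2 := hbefsupp 0 n hn ψ hψ0 φn hφns
      omega
    have hdzero : ∀ i, i < j → d i = 0 := by
      intro i hij
      by_contra hne
      obtain ⟨ψ, hψA, hψ⟩ := hex (y n) i (lt_of_le_of_ne (hd0 i) (Ne.symm hne))
      have hψn : ψ ∈ (y n).support := Finsupp.mem_support_iff.2 hψ
      have h1 := hAbef i j hij ψ hψA φ0 hφ0A
      have h2 := hbefsupp 0 n hn φ0 hφ0s ψ hψn
      omega
    -- level of A j
    obtain ⟨N, hN1, hN2⟩ := hAacc j
    have hNle : N ≤ φ0.length := by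
      obtain ⟨σ0, hσ0len, hφ0S⟩ := hN1 φ0 hφ0A
      exact hσ0len ▸ sset_length_le hφ0S
    have hMle : ∀ σ : Node, σ.length = N →
        supOn (y m) (Sset σ) = supOn (y n) (Sset σ) := by
      intro σ hσ
      refine hsup (m-1) m n (by omega) (by omega) σ ?_
      rw [hσ]
      rcases Nat.eq_zero_or_pos (m-1) with h0 | hpos
      · rw [h0]
        refine le_trans ?_ (Finset.le_max (Finset.mem_image_of_mem _ hφ0s))
        exact WithBot.coe_le_coe.2 hNle
      · obtain ⟨χ, hχ⟩ := hsuppne (m-1) hpos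
        have h3 : φ0.length < χ.length := hbefsupp 0 (m-1) hpos φ0 hφ0s χ hχ
        refine le_trans ?_ (Finset.le_max (Finset.mem_image_of_mem _ hχ))
        exact WithBot.coe_le_coe.2 (by omega : N ≤ χ.length)
    have htake : ∀ φ ∈ A j, φ ∈ Sset (List.take N φ) ∧ (List.take N φ).length = N := by
      intro φ hφ
      obtain ⟨σ, hσlen, hφS⟩ := hN1 φ hφ
      have h1 : List.take N φ = σ := by rw [← hσlen]; exact sset_take hφS
      rw [h1]; exact ⟨hφS, hσlen⟩
    have hcanon : ∀ (χ σ : Node), σ.length = N → χ ∈ Sset σ → σ = List.take N χ :=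
      fun χ σ hl hS => by rw [← hl]; exact (sset_take hS).symm
    have huniq : ∀ φ ∈ A j, ∀ φ' ∈ A j, List.take N φ = List.take N φ' → φ = φ' := by
      intro φ hφ φ' hφ' he
      refine hN2 (List.take N φ) (htake φ hφ).2 φ hφ φ' hφ' (htake φ hφ).1 ?_
      rw [he]; exact (htake φ' hφ').1
    have hmim : ∀ φ ∈ A j, y n φ ≠ 0 →
        ∃ ψ, ψ ∈ Sset (List.take N φ) ∧ y m ψ ≠ 0 ∧ |y n φ| ≤ |y m ψ| := by
      intro φ hφ hyn
      have h1 : |y n φ| ≤ supOn (y n) (Sset (List.take N φ)) :=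
        le_supOn (y n) (htake φ hφ).1
      have h2 := hMle _ (htake φ hφ).2
      exact exists_supOn_attain (y m) _ (abs_pos.2 hyn) (h2 ▸ h1)
    choose! ψf hψf1 hψf2 hψf3 using hmim
    set P : Finset Node := (A j).filter (fun φ => y n φ ≠ 0) with hPdef
    set Old : Finset Node := (A j).filter (fun φ => y 0 φ ≠ 0 ∨ y m φ ≠ 0) with hOlddef
    have hPA : P ⊆ A j := Finset.filter_subset _ _
    have hOA : Old ⊆ A j := Finset.filter_subset _ _
    have hPyn : ∀ φ ∈ P, y n φ ≠ 0 := fun φ hφ => (Finset.mem_filter.1 hφ).2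
    have hmimS : ∀ φ ∈ P, ψf φ ∈ Sset (List.take N φ) :=
      fun φ hφ => hψf1 φ (hPA hφ) (hPyn φ hφ)
    have hmimne : ∀ φ ∈ P, y m (ψf φ) ≠ 0 := fun φ hφ => hψf2 φ (hPA hφ) (hPyn φ hφ)
    have hmimge : ∀ φ ∈ P, |y n φ| ≤ |y m (ψf φ)| := fun φ hφ => hψf3 φ (hPA hφ) (hPyn φ hφ)
    have hmimtake : ∀ φ ∈ P, List.take N (ψf φ) = List.take N φ := by
      intro φ hφ
      have h1 := sset_take (hmimS φ hφ)
      rwa [(htake φ (hPA hφ)).2] at h1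
    have hinj : ∀ φ ∈ P, ∀ φ' ∈ P, ψf φ = ψf φ' → φ = φ' := by
      intro φ hφ φ' hφ' he
      apply huniq φ (hPA hφ) φ' (hPA hφ')
      rw [← hmimtake φ hφ, ← hmimtake φ' hφ', he]
    set Bj : Finset Node := Old ∪ P.image ψf with hBjdef
    have hOldMim : ∀ χ ∈ Old, ∀ φ ∈ P, χ ≠ ψf φ := by
      intro χ hχ φ hφ he
      have h1 : List.take N χ = List.take N φ := by rw [he, hmimtake φ hφ]
      have h2 : χ = φ := huniq χ (hOA hχ) φ (hPA hφ) h1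
      obtain ⟨-, hor⟩ := Finset.mem_filter.1 hχ
      have hyn : y n χ ≠ 0 := h2 ▸ hPyn φ hφ
      rcases hor with h | h
      · rcases hdis 0 n hn χ with h' | h'
        · exact h h'
        · exact hyn h'
      · rcases hdis m n hmn χ with h' | h'
        · exact h h'
        · exact hyn h'
    have hdisjU : Disjoint Old (P.image ψf) := by
      refine Finset.disjoint_left.2 fun χ hχO hχI => ?_
      obtain ⟨φ, hφP, he⟩ := Finset.mem_image.1 hχI
      exact hOldMim χ hχO φ hφP he.symm
    have hBmem : ∀ χ ∈ Bj, χ ∈ Sset (List.take N χ) ∧ (List.take N χ).length = N := by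
      intro χ hχ
      rcases Finset.mem_union.1 hχ with h | h
      · exact htake χ (hOA h)
      · obtain ⟨φ, hφP, rfl⟩ := Finset.mem_image.1 h
        constructor
        · rw [hmimtake φ hφP]; exact hmimS φ hφP
        · rw [hmimtake φ hφP]; exact (htake φ (hPA hφP)).2
    have hBacc : Acceptable Bj := by
      refine ⟨N, fun χ hχ => ⟨List.take N χ, (hBmem χ hχ).2, (hBmem χ hχ).1⟩, ?_⟩
      intro σ hσ χ hχ χ' hχ' hS hS'
      have e1 : σ = List.take N χ := hcanon χ σ hσ hS
      have e2 : σ = List.take N χ' := hcanon χ' σ hσ hS'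
      have etake : List.take N χ = List.take N χ' := by rw [← e1, e2]
      rcases Finset.mem_union.1 hχ with h1 | h1 <;> rcases Finset.mem_union.1 hχ' with h2 | h2
      · exact huniq χ (hOA h1) χ' (hOA h2) etake
      · exfalso
        obtain ⟨φ', hφ'P, rfl⟩ := Finset.mem_image.1 h2
        have h3 : List.take N χ = List.take N φ' := by
          rw [etake, hmimtake φ' hφ'P]
        have h4 : χ = φ' := huniq χ (hOA h1) φ' (hPA hφ'P) h3
        obtain ⟨-, hor⟩ := Finset.mem_filter.1 h1
        have hyn : y n χ ≠ 0 := h4 ▸ hPyn φ' hφ'P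
        rcases hor with h | h
        · rcases hdis 0 n hn χ with h' | h'
          · exact h h'
          · exact hyn h'
        · rcases hdis m n hmn χ with h' | h'
          · exact h h'
          · exact hyn h'
      · exfalso
        obtain ⟨φ, hφP, rfl⟩ := Finset.mem_image.1 h1
        have h3 : List.take N χ' = List.take N φ := by rw [← etake, hmimtake φ hφP]
        have h4 : χ' = φ := huniq χ' (hOA h2) φ (hPA hφP) h3
        obtain ⟨-, hor⟩ := Finset.mem_filter.1 h2
        have hyn : y n χ' ≠ 0 := h4 ▸ hPyn φ hφP
        rcases hor with h | h
        · rcases hdis 0 n hn χ' with h' | h'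
          · exact h h'
          · exact hyn h'
        · rcases hdis m n hmn χ' with h' | h'
          · exact h h'
          · exact hyn h'
      · obtain ⟨φ, hφP, rfl⟩ := Finset.mem_image.1 h1
        obtain ⟨φ', hφ'P, rfl⟩ := Finset.mem_image.1 h2
        have h3 : List.take N φ = List.take N φ' := by
          rw [← hmimtake φ hφP, ← hmimtake φ' hφ'P, etake]
        rw [huniq φ (hPA hφP) φ' (hPA hφ'P) h3]
    -- values of z on the pieces
    set n' : ℕ := n + 1 with hn'def
    set z : Node →₀ ℝ := (y 0 + y m) + (y 0 + y n') with hzdef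
    have habsz : ∀ φ, |z φ| = 2*|y 0 φ| + |y m φ| + |y n' φ| := by
      intro φ
      have h1 : z φ = 2*(y 0 φ) + y m φ + y n' φ := by
        simp [hzdef, Finsupp.add_apply]; ring
      rw [h1]
      exact abs_triple (hdis 0 m hm φ) (hdis 0 n' (by omega) φ) (hdis m n' (by omega) φ)
    have hOld0 : ∑ φ ∈ Old, |y 0 φ| = b j := by
      refine Finset.sum_subset hOA (fun φ hφ hnφ => ?_)
      by_contra hne
      exact hnφ (Finset.mem_filter.2 ⟨hφ, Or.inl (fun h => hne (by rw [h]; simp))⟩)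
    have hOldm : ∑ φ ∈ Old, |y m φ| = c j := by
      refine Finset.sum_subset hOA (fun φ hφ hnφ => ?_)
      by_contra hne
      exact hnφ (Finset.mem_filter.2 ⟨hφ, Or.inr (fun h => hne (by rw [h]; simp))⟩)
    have hPn : ∑ φ ∈ P, |y n φ| = d j := by
      refine Finset.sum_subset hPA (fun φ hφ hnφ => ?_)
      by_contra hne
      exact hnφ (Finset.mem_filter.2 ⟨hφ, fun h => hne (by rw [h]; simp)⟩)
    have hBval : 2*b j + c j + d j ≤ ∑ φ ∈ Bj, |z φ| := by
      rw [hBjdef, Finset.sum_union hdisjU]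
      have h1 : 2*b j + c j ≤ ∑ φ ∈ Old, |z φ| := by
        calc 2*b j + c j = ∑ φ ∈ Old, (2*|y 0 φ| + |y m φ|) := by
              rw [Finset.sum_add_distrib, ← Finset.mul_sum, hOld0, hOldm]
          _ ≤ ∑ φ ∈ Old, |z φ| := by
              refine Finset.sum_le_sum fun φ _ => ?_
              rw [habsz φ]
              linarith [abs_nonneg (y n' φ)]
      have h2 : d j ≤ ∑ χ ∈ P.image ψf, |z χ| := by
        rw [Finset.sum_image hinj]
        rw [← hPn]
        refine Finset.sum_le_sum fun φ hφ => ?_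
        refine le_trans (hmimge φ hφ) ?_
        rw [habsz (ψf φ)]
        linarith [abs_nonneg (y 0 (ψf φ)), abs_nonneg (y n' (ψf φ))]
      linarith
    -- the modified first chain
    set G1 : Fin k → Finset Node := fun i => if i = j then Bj else A i ∩ (y 0).support
      with hG1def
    have hG1j : G1 j = Bj := by rw [hG1def]; simp
    have hG1ne : ∀ i, i ≠ j → G1 i = A i ∩ (y 0).support := by
      intro i h; rw [hG1def]; simp [h]
    have hBsupp : ∀ χ ∈ Bj, χ ∈ (y 0).support ∨ χ ∈ (y m).support := by
      intro χ hχ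
      rcases Finset.mem_union.1 hχ with h | h
      · rcases (Finset.mem_filter.1 h).2 with h' | h'
        · exact Or.inl (Finsupp.mem_support_iff.2 h')
        · exact Or.inr (Finsupp.mem_support_iff.2 h')
      · obtain ⟨φ, hφP, rfl⟩ := Finset.mem_image.1 h
        exact Or.inr (Finsupp.mem_support_iff.2 (hmimne φ hφP))
    have hG1acc : ∀ i, Acceptable (G1 i) := by
      intro i
      by_cases h : i = j
      · rw [h, hG1j]; exact hBacc
      · rw [hG1ne i h]; exact acceptable_subset Finset.inter_subset_left (hAacc i)
    have hG1bef : ∀ i i' : Fin k, i < i' → Before (G1 i) (G1 i') := by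
      intro i i' hii
      by_cases h2 : i' = j
      · have hii' : i < j := h2 ▸ hii
        have h3 : i ≠ j := ne_of_lt hii'
        rw [hG1ne i h3, h2, hG1j]
        intro φ hφ ψ hψ
        rcases Finset.mem_union.1 hψ with h | h
        · exact hAbef i j hii' φ (Finset.mem_inter.1 hφ).1 ψ (hOA h)
        · obtain ⟨φ', hφ'P, rfl⟩ := Finset.mem_image.1 h
          exact hbefsupp 0 m hm φ (Finset.mem_inter.1 hφ).2 _
            (Finsupp.mem_support_iff.2 (hmimne φ' hφ'P))
      · by_cases h1 : i = j
        · have hii' : j < i' := h1 ▸ hii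
          have hempty : A i' ∩ (y 0).support = ∅ := by
            refine Finset.eq_empty_of_forall_notMem fun φ hφ => ?_
            have h4 : |y 0 φ| ≤ b i' := by
              rw [hbdef]
              exact Finset.single_le_sum (fun ψ _ => abs_nonneg ((y 0) ψ))
                (Finset.mem_inter.1 hφ).1
            have h5 : y 0 φ ≠ 0 := Finsupp.mem_support_iff.1 (Finset.mem_inter.1 hφ).2
            have h6 := hbzero i' hii'
            have h7 := abs_pos.2 h5
            linarith
          rw [hG1ne i' h2, hempty]
          intro φ hφ ψ hψ
          exact absurd hψ (Finset.notMem_empty ψ)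
        · rw [hG1ne i h1, hG1ne i' h2]
          exact before_mono Finset.inter_subset_left Finset.inter_subset_left (hAbef i i' hii)
    have hG1val : ∀ i, i ≠ j → ∑ φ ∈ G1 i, |z φ| = 2 * b i := by
      intro i h
      rw [hG1ne i h]
      have h1 : ∀ φ ∈ A i ∩ (y 0).support, |z φ| = 2*|y 0 φ| := by
        intro φ hφ
        have h5 : y 0 φ ≠ 0 := Finsupp.mem_support_iff.1 (Finset.mem_inter.1 hφ).2
        have hm0 : y m φ = 0 := by
          rcases hdis 0 m hm φ with h' | h'
          · exact absurd h' h5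
          · exact h'
        have hn0 : y n' φ = 0 := by
          rcases hdis 0 n' (by omega) φ with h' | h'
          · exact absurd h' h5
          · exact h'
        rw [habsz φ, hm0, hn0]
        simp
      rw [Finset.sum_congr rfl h1]
      rw [← Finset.mul_sum]
      congr 1
      refine Finset.sum_subset Finset.inter_subset_left (fun φ hφ hnφ => ?_)
      have : φ ∉ (y 0).support := fun hs => hnφ (Finset.mem_inter.2 ⟨hφ, hs⟩)
      simp [Finsupp.notMem_support_iff.1 this]
    -- z has norm at most 2
    have hz2 : normY z ≤ 2 := by
      rw [hzdef]
      calc normY ((y 0 + y m) + (y 0 + y n')) ≤ normY (y 0 + y m) + normY (y 0 + y n') :=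
            normY_add_le _ _
        _ ≤ 2 := by
            have h1 := hx m hm
            have h2 := hx n' (by omega)
            linarith
    -- the key bound for every chain of y n'
    have hkey2 : ∀ r ∈ SY (y n'), r^2 ≤ 16*δ := by
      intro r hr
      obtain ⟨l, E, hEacc, hEbef, rfl⟩ := hr
      have hE0 : ∀ jl, ∑ φ ∈ E jl ∩ (y n').support, |z φ| = ∑ φ ∈ E jl, |y n' φ| := by
        intro jl
        have h1 : ∀ φ ∈ E jl ∩ (y n').support, |z φ| = |y n' φ| := by
          intro φ hφ
          have h5 : y n' φ ≠ 0 := Finsupp.mem_support_iff.1 (Finset.mem_inter.1 hφ).2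
          have h00 : y 0 φ = 0 := by
            rcases hdis 0 n' (by omega) φ with h' | h'
            · exact h'
            · exact absurd h' h5
          have hm0 : y m φ = 0 := by
            rcases hdis m n' (by omega) φ with h' | h'
            · exact h'
            · exact absurd h' h5
          rw [habsz φ, h00, hm0]
          simp
        rw [Finset.sum_congr rfl h1]
        refine Finset.sum_subset Finset.inter_subset_left (fun φ hφ hnφ => ?_)
        have : φ ∉ (y n').support := fun hs => hnφ (Finset.mem_inter.2 ⟨hφ, hs⟩)
        simp [Finsupp.notMem_support_iff.1 this]
      have hcross : ∀ i jl, Before (G1 i) (E jl ∩ (y n').support) := by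
        intro i jl φ hφ ψ hψ
        have hψs : ψ ∈ (y n').support := (Finset.mem_inter.1 hψ).2
        by_cases h : i = j
        · subst h
          rw [hG1j] at hφ
          rcases hBsupp φ hφ with h' | h'
          · exact hbefsupp 0 n' (by omega) φ h' ψ hψs
          · exact hbefsupp m n' (by omega) φ h' ψ hψs
        · rw [hG1ne i h] at hφ
          exact hbefsupp 0 n' (by omega) φ (Finset.mem_inter.1 hφ).2 ψ hψs
      have hval := chain_append_le_normY z G1 (fun jl => E jl ∩ (y n').support)
        hG1acc hG1bef
        (fun jl => acceptable_subset Finset.inter_subset_left (hEacc jl))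
        (fun i jl hij => before_mono Finset.inter_subset_left Finset.inter_subset_left
          (hEbef i jl hij))
        hcross
      rw [show (∑ jl, (∑ φ ∈ E jl ∩ (y n').support, |z φ|)^2) =
          ∑ jl, (∑ φ ∈ E jl, |y n' φ|)^2 from
        Finset.sum_congr rfl fun jl _ => by rw [hE0 jl]] at hval
      have hval2 := le_trans hval hz2
      set S1 : ℝ := ∑ i, (∑ φ ∈ G1 i, |z φ|)^2 with hS1
      set S2 : ℝ := ∑ jl, (∑ φ ∈ E jl, |y n' φ|)^2 with hS2
      have hS1nn : 0 ≤ S1 := Finset.sum_nonneg fun _ _ => sq_nonneg _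
      have hS2nn : 0 ≤ S2 := Finset.sum_nonneg fun _ _ => sq_nonneg _
      have h6 : S1 + S2 ≤ 4 := by
        nlinarith [Real.sq_sqrt (show (0:ℝ) ≤ S1 + S2 by linarith),
          Real.sqrt_nonneg (S1 + S2)]
      -- lower bound for S1
      have h7 : (∑ i ∈ Finset.univ.erase j, (2*b i)^2) + (2*b j + c j + d j)^2 ≤ S1 := by
        rw [hS1, ← Finset.sum_erase_add _ _ (Finset.mem_univ j)]
        refine add_le_add (Finset.sum_le_sum fun i hi => ?_) ?_
        · rw [hG1val i (Finset.mem_erase.1 hi).1]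
        · rw [hG1j]
          have h8 : 0 ≤ 2*b j + c j + d j := by
            have := hb0 j; have := hc0 j; have := hd0 j; linarith
          nlinarith [hBval]
      -- upper bound for the full sum via the original chain
      have h9 : ∑ i ∈ Finset.univ.erase j, (2*b i + c i + d i)^2 ≤
          (∑ i ∈ Finset.univ.erase j, (2*b i)^2) +
          ∑ i ∈ Finset.univ.erase j, (c i - d i)^2 := by
        rw [← Finset.sum_add_distrib]
        refine Finset.sum_le_sum fun i hi => ?_
        have hij := (Finset.mem_erase.1 hi).1
        rw [hczero i hij]
        rcases lt_or_gt_of_ne hij with h | h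
        · rw [hdzero i h]
          exact le_of_eq (by ring)
        · rw [hbzero i h]
          exact le_of_eq (by ring)
      have h10 : ∑ i ∈ Finset.univ.erase j, (c i - d i)^2 ≤ ∑ i, (c i - d i)^2 :=
        Finset.sum_le_sum_of_subset_of_nonneg (Finset.subset_univ _)
          (fun i _ _ => sq_nonneg _)
      have h11 : ∑ i, (2*b i + c i + d i)^2 =
          (∑ i ∈ Finset.univ.erase j, (2*b i + c i + d i)^2) + (2*b j + c j + d j)^2 :=
        (Finset.sum_erase_add _ _ (Finset.mem_univ j)).symm
      -- r^2 = S2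
      have h12 : (Real.sqrt S2)^2 = S2 := Real.sq_sqrt hS2nn
      -- combine
      rw [h12]
      have hδsq : 4*(1-δ)^2 = 4 - 8*δ + 4*δ^2 := by ring
      have hδ2 : (0:ℝ) ≤ δ^2 := sq_nonneg δ
      linarith [hSuv, hSdiff, h6, h7, h9, h10, h11]
    have h13 : normY (y n') ≤ Real.sqrt (16*δ) := by
      refine normY_le (fun r hr => ?_) (Real.sqrt_nonneg _)
      have h14 := hkey2 r hr
      have h15 := SY_nonneg hr
      calc r = Real.sqrt (r^2) := (Real.sqrt_sq h15).symm
        _ ≤ Real.sqrt (16*δ) := Real.sqrt_le_sqrt h14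
    have h16 : ηminus ≤ Real.sqrt (16*δ) := le_trans (hybound n' (by omega)).1 h13
    have h17 : ηminus^2 ≤ 16*δ := by
      nlinarith [Real.sq_sqrt (show (0:ℝ) ≤ 16*δ by linarith)]
    linarith [hbig, h17, hsqrt8δ]

  · -- CASE 2 : no set straddles the supports of y 0 and y n
    push_neg at hstr
    have hbd : ∀ i, b i * d i = 0 := by
      intro i
      rcases eq_or_lt_of_le (hb0 i) with h | h
      · rw [← h]; ring
      · have h2 := hstr i h
        have h3 : d i = 0 := le_antisymm h2 (hd0 i)
        rw [h3]; ring
    have hSvsplit : ∑ i, (b i + d i)^2 = (∑ i, (b i)^2) + ∑ i, (d i)^2 := by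
      calc ∑ i, (b i + d i)^2 = ∑ i, ((b i)^2 + (d i)^2 + 2*(b i * d i)) :=
            Finset.sum_congr rfl fun i _ => by ring
        _ = (∑ i, ((b i)^2 + (d i)^2)) + 2*∑ i, (b i * d i) := by
            rw [Finset.sum_add_distrib, Finset.mul_sum]
        _ = (∑ i, ((b i)^2 + (d i)^2)) := by
            rw [show (∑ i, (b i * d i)) = 0 from Finset.sum_eq_zero fun i _ => hbd i]
            ring
        _ = (∑ i, (b i)^2) + ∑ i, (d i)^2 := Finset.sum_add_distrib
    have hsqSu : Real.sqrt (∑ i, (b i + c i)^2) ≤ 1 := by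
      calc Real.sqrt (∑ i, (b i + c i)^2) ≤ Real.sqrt 1 := Real.sqrt_le_sqrt hSu
        _ = 1 := Real.sqrt_one
    have hsqSv1 : Real.sqrt (∑ i, (b i + d i)^2) ≤ 1 := by
      calc Real.sqrt (∑ i, (b i + d i)^2) ≤ Real.sqrt 1 := Real.sqrt_le_sqrt hSv
        _ = 1 := Real.sqrt_one
    have hsqSuv : 2*(1-δ) < Real.sqrt (∑ i, (2*b i + c i + d i)^2) := by
      have h1 : (2*(1-δ))^2 < ∑ i, (2*b i + c i + d i)^2 := by
        calc (2*(1-δ))^2 = 4*(1-δ)^2 := by ring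
          _ < _ := hSuv
      have h2 : (0:ℝ) ≤ 2*(1-δ) := by linarith
      calc 2*(1-δ) = Real.sqrt ((2*(1-δ))^2) := (Real.sqrt_sq h2).symm
        _ < Real.sqrt (∑ i, (2*b i + c i + d i)^2) := Real.sqrt_lt_sqrt (sq_nonneg _) h1
    have hminkuv : Real.sqrt (∑ i, (2*b i + c i + d i)^2) ≤
        Real.sqrt (∑ i, (b i + c i)^2) + Real.sqrt (∑ i, (b i + d i)^2) := by
      rw [show (∑ i, (2*b i + c i + d i)^2) = ∑ i, ((b i + c i) + (b i + d i))^2 from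
        Finset.sum_congr rfl fun i _ => by ring]
      exact sqrt_sum_sq_add_le _ _
    have hsqSv : 1 - 2*δ < Real.sqrt (∑ i, (b i + d i)^2) := by
      linarith [hminkuv, hsqSuv, hsqSu]
    have hSvlb : (1-2*δ)^2 < ∑ i, (b i + d i)^2 :=
      sq_lt_of_lt_sqrt (by linarith) hsqSv
    have hSd : ηminus^2 - 4*δ < ∑ i, (d i)^2 := by
      have h6 : (1-2*δ)^2 = 1 - 4*δ + 4*δ^2 := by ring
      linarith [hSvlb, hSvsplit, hSb, sq_nonneg δ]
    have hcne : ∃ i, c i ≠ 0 := by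
      by_contra hc
      push_neg at hc
      have h1 : ∑ i, (b i + c i)^2 = ∑ i, (b i)^2 :=
        Finset.sum_congr rfl fun i _ => by rw [hc i]; ring
      have h2 : 1 - 2*δ < Real.sqrt (∑ i, (b i + c i)^2) := by
        linarith [hminkuv, hsqSuv, hsqSv1]
      have h4 : (1-2*δ)^2 < ∑ i, (b i)^2 := by
        rw [← h1]
        exact sq_lt_of_lt_sqrt (by linarith) h2
      have h6 : (1-2*δ)^2 = 1 - 4*δ + 4*δ^2 := by ring
      linarith [hSb, hbig, hsqrt8δ, sq_nonneg δ, h4]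
    set F : Finset (Fin k) := Finset.univ.filter (fun i => c i ≠ 0) with hFdef
    have hFne : F.Nonempty := by
      obtain ⟨i, hi⟩ := hcne
      exact ⟨i, Finset.mem_filter.2 ⟨Finset.mem_univ i, hi⟩⟩
    set i0 : Fin k := F.max' hFne with hi0def
    have hi0F : i0 ∈ F := F.max'_mem hFne
    have hci0 : c i0 ≠ 0 := (Finset.mem_filter.1 hi0F).2
    have hcpos : 0 < c i0 := lt_of_le_of_ne (hc0 i0) (Ne.symm hci0)
    have hcmax : ∀ i, i0 < i → c i = 0 := by
      intro i h
      by_contra hne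
      have h1 : i ∈ F := Finset.mem_filter.2 ⟨Finset.mem_univ i, hne⟩
      exact absurd (F.le_max' i h1) (not_le.2 h)
    obtain ⟨φm, hφmA, hφm⟩ := hex (y m) i0 hcpos
    have hφms : φm ∈ (y m).support := Finsupp.mem_support_iff.2 hφm
    have hdzero2 : ∀ i, i < i0 → d i = 0 := by
      intro i h
      by_contra hne
      obtain ⟨ψ, hψA, hψ⟩ := hex (y n) i (lt_of_le_of_ne (hd0 i) (Ne.symm hne))
      have h1 := hAbef i i0 h ψ hψA φm hφmA
      have h2 := hbefsupp m n hmn φm hφms ψ (Finsupp.mem_support_iff.2 hψ)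
      omega
    have htail : ∑ i ∈ Finset.univ.erase i0, (d i)^2 ≤ ∑ i, (c i - d i)^2 := by
      calc ∑ i ∈ Finset.univ.erase i0, (d i)^2
          ≤ ∑ i ∈ Finset.univ.erase i0, (c i - d i)^2 := by
            refine Finset.sum_le_sum fun i hi => ?_
            have hij := (Finset.mem_erase.1 hi).1
            rcases lt_or_gt_of_ne hij with h | h
            · rw [hdzero2 i h]
              simpa using sq_nonneg (c i)
            · rw [hcmax i h]
              exact le_of_eq (by ring)
        _ ≤ ∑ i, (c i - d i)^2 :=
            Finset.sum_le_sum_of_subset_of_nonneg (Finset.subset_univ _)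
              (fun _ _ _ => sq_nonneg _)
    have hdi0sq : ηminus^2 - 12*δ < (d i0)^2 := by
      have h1 : (∑ i ∈ Finset.univ.erase i0, (d i)^2) + (d i0)^2 = ∑ i, (d i)^2 :=
        Finset.sum_erase_add _ _ (Finset.mem_univ i0)
      linarith [hSd, htail, hSdiff]
    have hXpos : (0:ℝ) < ηminus^2 - 12*δ := by linarith [hbig, hsqrt8δ, hδ0]
    have hdi0 : Real.sqrt (ηminus^2 - 12*δ) < d i0 := by
      have h1 : Real.sqrt (ηminus^2 - 12*δ) < Real.sqrt ((d i0)^2) :=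
        Real.sqrt_lt_sqrt (le_of_lt hXpos) hdi0sq
      rwa [Real.sqrt_sq (hd0 i0)] at h1
    have hcd : (c i0 - d i0)^2 < 8*δ := by
      have h1 : (c i0 - d i0)^2 ≤ ∑ i, (c i - d i)^2 :=
        Finset.single_le_sum (f := fun i => (c i - d i)^2) (fun i _ => sq_nonneg _)
          (Finset.mem_univ i0)
      linarith
    have hcdlt : d i0 - c i0 < Real.sqrt (8*δ) := by
      refine lt_sqrt_of_sq_lt ?_
      rw [show (d i0 - c i0)^2 = (c i0 - d i0)^2 from by ring]
      exact hcd
    have hθX : θ^2 = ηminus^2 - 12*δ - 2*Real.sqrt (8*δ) := by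
      rw [hθ, Real.sq_sqrt (by rw [hδ']; linarith [hbig, hsqrt8δ] :
        (0:ℝ) ≤ ηminus^2 - δ'), hδ']
      ring
    have hθ0 : 0 ≤ θ := hθ ▸ Real.sqrt_nonneg _
    have hX1 : ηminus^2 - 12*δ ≤ 1 := by
      have h1 : ηminus^2 ≤ 1 := by
        have := mul_le_one₀ hη1 (le_of_lt hηpos) hη1
        nlinarith
      linarith
    have hX8 : 8*δ < ηminus^2 - 12*δ := by linarith [hbig, hsqrt8δ]
    have hθle : θ ≤ Real.sqrt (ηminus^2 - 12*δ) - Real.sqrt (8*δ) :=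
      theta_le_aux hθ0 (by linarith) (le_of_lt hXpos) hX1 (le_of_lt hX8) hθX
    refine ⟨A i0, hAacc i0, ?_, ?_⟩
    · show θ < c i0
      linarith [hdi0, hcdlt, hθle]
    · show θ < d i0
      linarith [hdi0, hθle, hsqrt8δ]
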